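/- arXiv:1107.1015 — 3 statements merged into one kernel-verified Lean document; each statement's English description precedes it below -/
import Mathlib

section
/- Let M ≥ 0 and let A, B be N×N normal matrices with operator norms ‖A‖ ≤ M and ‖B‖ ≤ M. Then for all integers d ≥ 1 and g ≥ 0, |C_{g,d}(A,B)| ≤ M^{2d} · p(d)² · (d!)^{2g−2+2d}, where p(d) is the number of partitions of d. -/
open MeasureTheory Matrix

namespace HCIZ

noncomputable instance (N : ℕ) : MeasurableSpace (Matrix (Fin N) (Fin N) ℂ) := borel _

instance (N : ℕ) : BorelSpace (Matrix (Fin N) (Fin N) ℂ) := ⟨rfl⟩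

/-- The number of cycles of a permutation (fixed points counted as cycles). -/
def cycleCount {d : ℕ} (π : Equiv.Perm (Fin d)) : ℕ := π.partition.parts.card

/-- `π` has cycle type `α` (1-cycles included). -/
def HasCycleType {d : ℕ} (π : Equiv.Perm (Fin d)) (α : d.Partition) : Prop :=
  π.partition.parts = α.parts

/-- The tuple `τ` consists of transpositions `(s_i t_i)`, `s_i < t_i`, with
`t_1 ≤ t_2 ≤ ⋯` (monotone condition). -/
def IsMonotoneTuple {d r : ℕ} (τ : Fin r → Equiv.Perm (Fin d)) : Prop :=
  (∀ i, (τ i).IsSwap) ∧ Monotone fun i => (τ i).support.max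

/-- The subgroup generated by `s` acts transitively on `Fin d`. -/
def GeneratesTransitively {d : ℕ} (s : Set (Equiv.Perm (Fin d))) : Prop :=
  ∀ x y : Fin d, ∃ g ∈ Subgroup.closure s, g x = y

/-- `H⃗^r(α,β)`: the number of monotone transitive factorizations of the identity
into `ρ σ τ_1 ⋯ τ_r` with `ρ` of cycle type `α` and `σ` of cycle type `β`. -/
noncomputable def Hr (d : ℕ) (α β : d.Partition) (r : ℕ) : ℕ :=
  Nat.card {T : Equiv.Perm (Fin d) × Equiv.Perm (Fin d) × (Fin r → Equiv.Perm (Fin d)) //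
    HasCycleType T.1 α ∧ HasCycleType T.2.1 β ∧ IsMonotoneTuple T.2.2 ∧
    T.1 * T.2.1 * (List.ofFn T.2.2).prod = 1 ∧
    GeneratesTransitively ({T.1, T.2.1} ∪ Set.range T.2.2)}

/-- `H̃^r(α,β)`: the same count without the transitivity requirement. -/
noncomputable def Hnt (d : ℕ) (α β : d.Partition) (r : ℕ) : ℕ :=
  Nat.card {T : Equiv.Perm (Fin d) × Equiv.Perm (Fin d) × (Fin r → Equiv.Perm (Fin d)) //
    HasCycleType T.1 α ∧ HasCycleType T.2.1 β ∧ IsMonotoneTuple T.2.2 ∧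
    T.1 * T.2.1 * (List.ofFn T.2.2).prod = 1}

/-- The monotone double Hurwitz number `H⃗_g(α,β) = H⃗^r(α,β)`,
`r = 2g - 2 + ℓ(α) + ℓ(β)`. -/
noncomputable def Hg (d g : ℕ) (α β : d.Partition) : ℕ :=
  Hr d α β (2 * g + α.parts.card + β.parts.card - 2)

/-- `m_r(π)`: monotone (not necessarily transitive) factorizations of `π`
into `r` transpositions. -/
noncomputable def mcount (d r : ℕ) (π : Equiv.Perm (Fin d)) : ℕ :=
  Nat.card {τ : Fin r → Equiv.Perm (Fin d) //
    IsMonotoneTuple τ ∧ (List.ofFn τ).prod = π}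

/-- Power sum `p_α(A) = ∏ Tr(A^{α_i})`. -/
noncomputable def pPoly {N : ℕ} (A : Matrix (Fin N) (Fin N) ℂ) {d : ℕ} (α : d.Partition) : ℂ :=
  (α.parts.map fun k => (A ^ k).trace).prod

/-- `φ_α = ∏ φ_{α_i}`. -/
noncomputable def momProd (Φ : ℕ → ℂ) {d : ℕ} (α : d.Partition) : ℂ :=
  (α.parts.map Φ).prod

/-- `C_{g,d}(A,B) = ∑_{α,β ⊢ d} (-1)^{d+ℓ(α)+ℓ(β)} H⃗_g(α,β)
(N^{-ℓ(α)} p_α(A)) (N^{-ℓ(β)} p_β(B))`. -/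
noncomputable def Cmat {N : ℕ} (g d : ℕ) (A B : Matrix (Fin N) (Fin N) ℂ) : ℂ :=
  ∑ α : d.Partition, ∑ β : d.Partition,
    (-1 : ℂ) ^ (d + α.parts.card + β.parts.card) * (Hg d g α β : ℂ) *
      (((N : ℂ) ^ α.parts.card)⁻¹ * pPoly A α) * (((N : ℂ) ^ β.parts.card)⁻¹ * pPoly B β)

/-- `C_{g,d}(Φ,Ψ) = ∑_{α,β ⊢ d} (-1)^{d+ℓ(α)+ℓ(β)} H⃗_g(α,β) φ_α ψ_β`. -/
noncomputable def Cseq (g d : ℕ) (Φ Ψ : ℕ → ℂ) : ℂ :=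
  ∑ α : d.Partition, ∑ β : d.Partition,
    (-1 : ℂ) ^ (d + α.parts.card + β.parts.card) * (Hg d g α β : ℂ) *
      momProd Φ α * momProd Ψ β

/-- The HCIZ integral `I_N(z;A,B)` with respect to a measure `μ` on `U(N)`. -/
noncomputable def hciz {N : ℕ} (μ : Measure (Matrix.unitaryGroup (Fin N) ℂ))
    (A B : Matrix (Fin N) (Fin N) ℂ) (z : ℂ) : ℂ :=
  ∫ U : Matrix.unitaryGroup (Fin N) ℂ,
    Complex.exp (-(z * (N : ℂ) *
      (A * (U : Matrix (Fin N) (Fin N) ℂ) * B *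
        ((U⁻¹ : Matrix.unitaryGroup (Fin N) ℂ) : Matrix (Fin N) (Fin N) ℂ)).trace)) ∂μ

/-- A free-energy branch for `I_N(·;A,B)` on the disc `D(0,ε)`: a holomorphic
function `F` with `F 0 = 0` and `exp (N² F z) = I_N(z;A,B)` on the disc. -/
def IsFreeEnergyBranch {N : ℕ} (μ : Measure (Matrix.unitaryGroup (Fin N) ℂ))
    (A B : Matrix (Fin N) (Fin N) ℂ) (ε : ℝ) (F : ℂ → ℂ) : Prop :=
  DifferentiableOn ℂ F (Metric.ball 0 ε) ∧ F 0 = 0 ∧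
    ∀ z ∈ Metric.ball (0 : ℂ) ε, Complex.exp ((N : ℂ) ^ 2 * F z) = hciz μ A B z

/-- The L² operator norm of a matrix. -/
noncomputable def opNorm {N : ℕ} (A : Matrix (Fin N) (Fin N) ℂ) : ℝ :=
  ‖Matrix.toEuclideanCLM (𝕜 := ℂ) A‖

/-- The all-ones partition `(1^d)`. -/
def onesPartition (d : ℕ) : d.Partition :=
  ⟨Multiset.replicate d 1, fun {i} hi => by
    rw [Multiset.eq_of_mem_replicate hi]; exact one_pos, by simp⟩

/-- The partition `(2,1^{d-2})` of `d`, for `d ≥ 2`. -/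
def twoOnesPartition (d : ℕ) (hd : 2 ≤ d) : d.Partition :=
  ⟨2 ::ₘ Multiset.replicate (d - 2) 1, fun {i} hi => by
    rcases Multiset.mem_cons.mp hi with h | h
    · omega
    · rw [Multiset.eq_of_mem_replicate h]; exact one_pos, by
    simp [Multiset.sum_cons]; omega⟩

/-! Each of the `p(d)²` terms of `C_{g,d}(A,B)` is bounded separately. A factorization
`ρ σ τ_1 ⋯ τ_r = 1` is determined by `ρ` and the `τ_i`, so `H⃗_g(α,β) ≤ (d!)^(r+1)`, and even
`≤ (d!)^r` when `α = (1^d)`, which forces `ρ = 1`; since `ℓ(α), ℓ(β) ≤ d`, both are at most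
`(d!)^(2g-2+2d)`. On the matrix side `|Tr A^k| ≤ N ‖A‖^k`, so `|N^{-ℓ(α)} p_α(A)| ≤ ‖A‖^d`. -/

lemma _root_.Multiset.prod_map_const_mul_pow {R : Type*} [CommMonoid R] (s : Multiset ℕ)
    (c x : R) :
    (s.map fun k => c * x ^ k).prod = c ^ s.card * x ^ s.sum := by
  induction s using Multiset.induction_on with
  | empty => simp
  | cons a s ih => rw [Multiset.map_cons, Multiset.prod_cons, ih, Multiset.card_cons,
      Multiset.sum_cons, pow_succ', pow_add, mul_mul_mul_comm]

lemma _root_.Nat.Partition.card_parts_le {d : ℕ} (α : d.Partition) : α.parts.card ≤ d := by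
  simpa [α.parts_sum] using Multiset.card_nsmul_le_sum (fun _ hx => α.parts_pos hx)

lemma _root_.Nat.Partition.one_le_card_parts {d : ℕ} (α : d.Partition) (hd : d ≠ 0) :
    1 ≤ α.parts.card := by
  refine Multiset.card_pos.mpr fun h => hd ?_
  simpa [h] using α.parts_sum.symm

section OpNorm

variable {N : ℕ}

lemma norm_apply_le_opNorm (C : Matrix (Fin N) (Fin N) ℂ) (i j : Fin N) :
    ‖C i j‖ ≤ opNorm C := by
  let T := Matrix.toEuclideanCLM (𝕜 := ℂ) C
  let e : EuclideanSpace ℂ (Fin N) := EuclideanSpace.single j 1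
  calc ‖C i j‖ = ‖T e i‖ := by simp [T, e, ← PiLp.toLp_single]
    _ ≤ ‖T e‖ := PiLp.norm_apply_le _ _
    _ ≤ ‖T‖ * ‖e‖ := T.le_opNorm e
    _ = opNorm C := by simp [T, e, opNorm]

lemma opNorm_pow_le (A : Matrix (Fin N) (Fin N) ℂ) {k : ℕ} (hk : 0 < k) :
    opNorm (A ^ k) ≤ opNorm A ^ k := by
  simpa only [opNorm, map_pow] using norm_pow_le' (Matrix.toEuclideanCLM (𝕜 := ℂ) A) hk

lemma norm_trace_le_opNorm (C : Matrix (Fin N) (Fin N) ℂ) : ‖C.trace‖ ≤ N * opNorm C :=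
  calc ‖C.trace‖ ≤ ∑ i, ‖C i i‖ := norm_sum_le _ _
    _ ≤ ∑ _i : Fin N, opNorm C := Finset.sum_le_sum fun i _ => norm_apply_le_opNorm C i i
    _ = N * opNorm C := by simp

lemma norm_pPoly_le {d : ℕ} (A : Matrix (Fin N) (Fin N) ℂ) (α : d.Partition) :
    ‖pPoly A α‖ ≤ (N : ℝ) ^ α.parts.card * opNorm A ^ d := by
  have hle : ∀ k ∈ α.parts, ‖(A ^ k).trace‖ ≤ N * opNorm A ^ k := fun k hk =>
    (norm_trace_le_opNorm _).trans <|
      mul_le_mul_of_nonneg_left (opNorm_pow_le A (α.parts_pos hk)) (Nat.cast_nonneg N)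
  calc ‖pPoly A α‖ = (α.parts.map fun k => ‖(A ^ k).trace‖).prod := by
        rw [pPoly, ← normHom_apply, map_multiset_prod, Multiset.map_map]; rfl
    _ ≤ (α.parts.map fun k => (N : ℝ) * opNorm A ^ k).prod :=
        Multiset.prod_map_le_prod_map₀ _ _ (fun _ _ => norm_nonneg _) hle
    _ = (N : ℝ) ^ α.parts.card * opNorm A ^ d := by
        rw [Multiset.prod_map_const_mul_pow, α.parts_sum]

lemma norm_inv_mul_pPoly_le {d : ℕ} (A : Matrix (Fin N) (Fin N) ℂ) (α : d.Partition) :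
    ‖((N : ℂ) ^ α.parts.card)⁻¹ * pPoly A α‖ ≤ opNorm A ^ d := by
  rw [norm_mul, norm_inv, norm_pow, Complex.norm_natCast]
  rcases (pow_nonneg (Nat.cast_nonneg N) α.parts.card : (0 : ℝ) ≤ _).eq_or_lt with h | h
  · rw [← h, _root_.inv_zero, zero_mul]; exact pow_nonneg (norm_nonneg _) d
  · rw [inv_mul_le_iff₀ h]; exact norm_pPoly_le A α

end OpNorm

lemma _root_.Equiv.Perm.eq_one_of_card_parts_partition {α : Type*} [Fintype α] [DecidableEq α]
    {π : Equiv.Perm α} (h : π.partition.parts.card = Fintype.card α) : π = 1 := by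
  have hcard : π.cycleType.card + (Fintype.card α - π.support.card) = Fintype.card α := by
    simpa [Equiv.Perm.parts_partition] using h
  -- every cycle has length at least `2`, so each one lowers the number of parts
  have htwo : 2 * π.cycleType.card ≤ π.support.card := by
    simpa [mul_comm, Equiv.Perm.sum_cycleType] using
      Multiset.card_nsmul_le_sum fun _ hx => Equiv.Perm.two_le_of_mem_cycleType hx
  have hsupp : π.support.card ≤ Fintype.card α := Finset.card_le_univ _
  exact Equiv.Perm.card_cycleType_eq_zero.mp (by omega)

lemma HasCycleType.eq_one {d : ℕ} {π : Equiv.Perm (Fin d)} {α : d.Partition}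
    (h : HasCycleType π α) (hα : α.parts.card = d) : π = 1 :=
  Equiv.Perm.eq_one_of_card_parts_partition (by rw [h, hα, Fintype.card_fin])

section Hurwitz

variable {d : ℕ} (α β : d.Partition) (r : ℕ)

lemma Hr_le_factorial_pow_succ : Hr d α β r ≤ d.factorial ^ (r + 1) := by
  calc Hr d α β r ≤ Nat.card (Equiv.Perm (Fin d) × (Fin r → Equiv.Perm (Fin d))) := by
        refine Nat.card_le_card_of_injective (fun T => (T.1.1, T.1.2.2)) ?_
        rintro ⟨⟨ρ, σ, τ⟩, h⟩ ⟨⟨ρ', σ', τ'⟩, h'⟩ heq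
        obtain ⟨rfl, rfl⟩ := Prod.mk.inj heq
        have hσ : σ = σ' := mul_left_cancel (mul_right_cancel (h.2.2.2.1.trans h'.2.2.2.1.symm))
        subst hσ
        rfl
    _ = d.factorial ^ (r + 1) := by
        simp [Nat.card_eq_fintype_card, Fintype.card_perm, pow_succ, mul_comm]

lemma Hr_le_factorial_pow (hα : α.parts.card = d) : Hr d α β r ≤ d.factorial ^ r := by
  calc Hr d α β r ≤ Nat.card (Fin r → Equiv.Perm (Fin d)) := by
        refine Nat.card_le_card_of_injective (fun T => T.1.2.2) ?_
        rintro ⟨⟨ρ, σ, τ⟩, h⟩ ⟨⟨ρ', σ', τ'⟩, h'⟩ (rfl : τ = τ')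
        obtain rfl := h.1.eq_one hα
        obtain rfl := h'.1.eq_one hα
        have hσ : σ = σ' := mul_right_cancel (h.2.2.2.1.trans h'.2.2.2.1.symm)
        subst hσ
        rfl
    _ = d.factorial ^ r := by simp [Nat.card_eq_fintype_card, Fintype.card_perm]

lemma Hg_le_factorial_pow (g : ℕ) : Hg d g α β ≤ d.factorial ^ (2 * g + 2 * d - 2) := by
  have hαd := α.card_parts_le
  have hβd := β.card_parts_le
  rcases hαd.eq_or_lt with hα | hα
  · exact (Hr_le_factorial_pow α β _ hα).trans <|
      Nat.pow_le_pow_right d.factorial_pos (by omega)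
  · have hα1 := α.one_le_card_parts (by omega)
    exact (Hr_le_factorial_pow_succ α β _).trans <|
      Nat.pow_le_pow_right d.factorial_pos (by omega)

end Hurwitz

theorem Cgd_bound_general (N : ℕ) (M : ℝ)
    (A B : Matrix (Fin N) (Fin N) ℂ)
    (hAbd : opNorm A ≤ M) (hBbd : opNorm B ≤ M)
    (d g : ℕ) :
    ‖Cmat g d A B‖ ≤
      M ^ (2 * d) * (Fintype.card (Nat.Partition d) : ℝ) ^ 2 *
        (d.factorial : ℝ) ^ (2 * g + 2 * d - 2) := by
  have hM : 0 ≤ M := (norm_nonneg _).trans hAbd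
  have hterm : ∀ α β : d.Partition,
      ‖(-1 : ℂ) ^ (d + α.parts.card + β.parts.card) * (Hg d g α β : ℂ) *
        (((N : ℂ) ^ α.parts.card)⁻¹ * pPoly A α) * (((N : ℂ) ^ β.parts.card)⁻¹ * pPoly B β)‖ ≤
      (d.factorial : ℝ) ^ (2 * g + 2 * d - 2) * M ^ d * M ^ d := by
    intro α β
    rw [norm_mul, norm_mul, norm_mul, norm_pow, norm_neg, norm_one, one_pow, one_mul,
      Complex.norm_natCast]
    gcongr
    · exact_mod_cast Hg_le_factorial_pow α β g
    · exact (norm_inv_mul_pPoly_le A α).trans (pow_le_pow_left₀ (norm_nonneg _) hAbd d)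
    · exact (norm_inv_mul_pPoly_le B β).trans (pow_le_pow_left₀ (norm_nonneg _) hBbd d)
  calc ‖Cmat g d A B‖
      ≤ ∑ α : d.Partition, ∑ β : d.Partition,
          (d.factorial : ℝ) ^ (2 * g + 2 * d - 2) * M ^ d * M ^ d := by
        refine (norm_sum_le _ _).trans (Finset.sum_le_sum fun α _ => ?_)
        exact (norm_sum_le _ _).trans (Finset.sum_le_sum fun β _ => hterm α β)
    _ = M ^ (2 * d) * (Fintype.card (Nat.Partition d) : ℝ) ^ 2 *
          (d.factorial : ℝ) ^ (2 * g + 2 * d - 2) := by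
        simp only [Finset.sum_const, Finset.card_univ, nsmul_eq_mul]
        ring

/-- Uniform bound: `|C_{g,d}(A,B)| ≤ M^{2d} p(d)² (d!)^{2g-2+2d}` for normal
matrices of operator norm at most `M`. -/
theorem Cgd_bound (N : ℕ) (M : ℝ) (hM : 0 ≤ M)
    (A B : Matrix (Fin N) (Fin N) ℂ)
    (hA : IsStarNormal A) (hB : IsStarNormal B)
    (hAbd : opNorm A ≤ M) (hBbd : opNorm B ≤ M)
    (d g : ℕ) (hd : 1 ≤ d) :
    ‖Cmat g d A B‖ ≤
      M ^ (2 * d) * (Fintype.card (Nat.Partition d) : ℝ) ^ 2 *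
        (d.factorial : ℝ) ^ (2 * g + 2 * d - 2) :=
  Cgd_bound_general N M A B hAbd hBbd d g

end HCIZ
end

section
/- Let d and N be integers with 1 ≤ d ≤ N. The d!×d! complex matrix G, with rows and columns indexed by the permutations of {1,…,d} and entries G_{ρσ} = N^{c(ρ⁻¹σ)}, where c(π) denotes the number of cycles of π, is invertible, and its inverse has entries (G⁻¹)_{ρσ} = Σ_{r=0}^∞ (−1)^r N^{−d−r} m_r(ρ⁻¹σ), the series converging absolutely, where m_r(π) is the number of r-tuples (τ_1,…,τ_r) of transpositions of {1,…,d} such that τ_1⋯τ_r = π and, writing τ_i = (s_i t_i) with s_i < t_i, one has t_1 ≤ ⋯ ≤ t_r. -/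
open MeasureTheory Matrix

namespace HCIZ

/-- The Gram matrix `G_{ρσ} = N^{c(ρ⁻¹σ)}` on `S(d)`. -/
noncomputable def gramMatrix (d N : ℕ) :
    Matrix (Equiv.Perm (Fin d)) (Equiv.Perm (Fin d)) ℂ :=
  Matrix.of fun ρ σ => (N : ℂ) ^ cycleCount (ρ⁻¹ * σ)


end HCIZ

/-
The Gram matrix is the image of `∑_π N^{c(π)} π ∈ ℂ[S_d]` under the right regular
representation. With the Jucys–Murphy elements `J_t = ∑_{s<t} (s t)`, that element factors as
`(N + J_{d-1}) ⋯ (N + J_0)`: every permutation of `{0, …, t}` is uniquely `π` or `(s t) π` with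
`π` a permutation of `{0, …, t-1}` and `s < t`, and in the second case `(s t)` joins the fixed
point `t` to a cycle of `π`, lowering the cycle count by one. As `‖J_t‖ ≤ t < N`, each factor
`N + J_t = N (1 + J_t / N)` is inverted by an absolutely convergent geometric series. By
induction on `k`, the Cauchy product of the first `k` inverses is `N^{-k} ∑_r (-1/N)^r` times the
sum of all products `τ_1 ⋯ τ_r` of transpositions whose larger points are nondecreasing and
below `k`; for `k = d` its `(ρ, σ)` entry is the stated series.
-/

open Finset

theorem Fin.monotone_snoc_iff {α : Type*} [Preorder α] {n : ℕ} {f : Fin n → α} {a : α} :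
    Monotone (Fin.snoc f a : Fin (n + 1) → α) ↔ Monotone f ∧ ∀ i, f i ≤ a := by
  refine ⟨fun h => ⟨fun i j hij => ?_, fun i => ?_⟩, fun ⟨hf, ha⟩ i j hij => ?_⟩
  · simpa using h (Fin.castSucc_le_castSucc_iff.2 hij)
  · simpa using h (Fin.le_last i.castSucc)
  · induction j using Fin.lastCases with
    | last =>
      induction i using Fin.lastCases with
      | last => simp
      | cast i => simpa using ha i
    | cast j =>
      induction i using Fin.lastCases with
      | last => exact absurd hij (not_le.2 (Fin.castSucc_lt_last j))
      | cast i => simpa using hf (Fin.castSucc_le_castSucc_iff.1 hij)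

namespace Equiv.Perm

section Fintype

variable {α : Type*} [Fintype α] [DecidableEq α]

theorem card_parts_partition (σ : Perm α) :
    σ.partition.parts.card = σ.cycleType.card + (Fintype.card α - #σ.support) := by
  simp [parts_partition]

theorem IsCycle.card_parts_partition_add_card_support {c : Perm α} (hc : c.IsCycle) :
    c.partition.parts.card + #c.support = Fintype.card α + 1 := by
  have := card_le_univ c.support
  rw [card_parts_partition, hc.cycleType, Multiset.card_singleton]
  omega

theorem Disjoint.card_parts_partition_mul {σ τ : Perm α} (h : σ.Disjoint τ) :
    (σ * τ).partition.parts.card + Fintype.card α =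
      σ.partition.parts.card + τ.partition.parts.card := by
  have hs : #(σ * τ).support = #σ.support + #τ.support := by
    rw [h.support_mul, card_union_of_disjoint h.disjoint_support]
  have := card_le_univ (σ * τ).support
  rw [card_parts_partition, card_parts_partition, card_parts_partition, h.cycleType_mul,
    Multiset.card_add]
  omega

theorem isCycle_swap_mul_cycleOf {π : Perm α} {x y : α} (hx : x ∈ π.support)
    (hy : y ∉ π.support) :
    (swap y x * π.cycleOf x).IsCycle ∧
      (swap y x * π.cycleOf x).support = insert y (π.cycleOf x).support := by
  obtain ⟨l, hl⟩ : ∃ l, toList π x = x :: l := by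
    obtain ⟨a, l, hl⟩ := List.exists_cons_of_length_pos (length_toList_pos_of_mem_support π x hx)
    have ha := toList_getElem_zero π x hx
    simp only [hl, List.getElem_cons_zero] at ha
    exact ⟨l, ha ▸ hl⟩
  have hnodup : (y :: x :: l).Nodup := by
    rw [← hl, List.nodup_cons, mem_toList_iff]
    exact ⟨fun h => hy (h.1.mem_support_iff.1 hx), nodup_toList π x⟩
  have hform : (y :: x :: l).formPerm = swap y x * π.cycleOf x := by
    rw [List.formPerm_cons_cons, ← hl, formPerm_toList]
  rw [← hform]
  refine ⟨List.isCycle_formPerm hnodup (by simp), ?_⟩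
  rw [List.support_formPerm_of_nodup _ hnodup (by simp), ← formPerm_toList, hl,
    List.support_formPerm_of_nodup _ hnodup.of_cons fun z h =>
      toList_ne_singleton π x z (hl.trans h), List.toFinset_cons]

theorem card_parts_partition_swap_mul_of_mem_support {π : Perm α} {x y : α} (hx : x ∈ π.support)
    (hy : y ∉ π.support) :
    (swap y x * π).partition.parts.card + 1 = π.partition.parts.card := by
  obtain ⟨hC, hCsupp⟩ := isCycle_swap_mul_cycleOf hx hy
  have hc := (isCycle_cycleOf π (mem_support.1 hx)).card_parts_partition_add_card_support
  have hxc : x ∈ (π.cycleOf x).support := mem_support_cycleOf_iff.2 ⟨SameCycle.refl _ _, hx⟩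
  set c := π.cycleOf x
  have hdisj : (π * c⁻¹).Disjoint c :=
    disjoint_mul_inv_of_mem_cycleFactorsFinset (cycleOf_mem_cycleFactorsFinset_iff.2 hx)
  have hsupp : π.support = (π * c⁻¹).support ∪ c.support := by
    rw [← hdisj.support_mul, inv_mul_cancel_right]
  have hyz : y ∉ (π * c⁻¹).support := fun h => hy (hsupp ▸ mem_union_left _ h)
  have hcomm : Commute (swap y x) (π * c⁻¹) := by
    refine Disjoint.commute ?_
    rw [disjoint_iff_disjoint_support, support_swap (ne_of_mem_of_not_mem hx hy).symm]
    simp [hyz, disjoint_right.1 hdisj.disjoint_support hxc]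
  have hdisj' : (π * c⁻¹).Disjoint (swap y x * c) := by
    rw [disjoint_iff_disjoint_support, hCsupp, disjoint_insert_right]
    exact ⟨hyz, hdisj.disjoint_support⟩
  have hfact : swap y x * π = π * c⁻¹ * (swap y x * c) := by
    rw [← mul_assoc, ← hcomm.eq, mul_assoc, inv_mul_cancel_right]
  have hπ := hdisj.card_parts_partition_mul
  rw [inv_mul_cancel_right] at hπ
  have hC' := hC.card_parts_partition_add_card_support
  rw [hCsupp, card_insert_of_notMem fun h => hy (hsupp ▸ mem_union_right _ h)] at hC'
  have := hdisj'.card_parts_partition_mul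
  rw [← hfact] at this
  omega

theorem card_parts_partition_swap_mul {π : Perm α} {x y : α} (hxy : x ≠ y) (hy : π y = y) :
    (swap x y * π).partition.parts.card + 1 = π.partition.parts.card := by
  by_cases hx : π x = x
  · have hdisj : (swap x y).Disjoint π := by
      rw [disjoint_iff_disjoint_support, support_swap hxy]
      simp [notMem_support.2 hx, notMem_support.2 hy]
    have hswap := (isCycle_swap hxy).card_parts_partition_add_card_support
    rw [card_support_swap hxy] at hswap
    have := hdisj.card_parts_partition_mul
    omega
  · rw [swap_comm]
    exact card_parts_partition_swap_mul_of_mem_support (mem_support.2 hx) (notMem_support.2 hy)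

end Fintype

section LinearOrder

variable {α : Type*} [LinearOrder α]

theorem IsSwap.exists_lt {g : Perm α} (h : g.IsSwap) : ∃ s t, s < t ∧ g = swap s t := by
  obtain ⟨x, y, hxy, rfl⟩ := h
  rcases hxy.lt_or_gt with h | h
  · exact ⟨x, y, h, rfl⟩
  · exact ⟨y, x, h, swap_comm x y⟩

theorem max_support_swap [Fintype α] {s t : α} (h : s < t) : (swap s t).support.max = t := by
  rw [support_swap h.ne, max_insert, max_singleton, max_eq_right (WithBot.coe_le_coe.2 h.le)]

end LinearOrder

end Equiv.Perm

section GeometricCauchy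

variable {R : Type*} [NormedRing R]

theorem summable_norm_pow_of_norm_lt_one {x : R} (hx : ‖x‖ < 1) : Summable (‖x ^ ·‖) :=
  (summable_geometric_of_lt_one (norm_nonneg x) hx).of_norm_bounded_eventually_nat
    (by simpa using eventually_norm_pow_le x)

theorem summable_norm_sum_antidiagonal_mul_pow {a : ℕ → R} (ha : Summable (‖a ·‖)) {x : R}
    (hx : ‖x‖ < 1) : Summable fun n => ‖∑ p ∈ antidiagonal n, a p.1 * x ^ p.2‖ :=
  summable_norm_sum_mul_antidiagonal_of_summable_norm ha (summable_norm_pow_of_norm_lt_one hx)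

theorem tsum_sum_antidiagonal_mul_pow_mul_one_sub [CompleteSpace R] {a : ℕ → R}
    (ha : Summable (‖a ·‖)) {x : R} (hx : ‖x‖ < 1) :
    (∑' n, ∑ p ∈ antidiagonal n, a p.1 * x ^ p.2) * (1 - x) = ∑' n, a n := by
  rw [← tsum_mul_tsum_eq_tsum_sum_antidiagonal_of_summable_norm ha
    (summable_norm_pow_of_norm_lt_one hx), mul_assoc, geom_series_mul_neg x hx, mul_one]

end GeometricCauchy

section LinftyOp

attribute [local instance] Matrix.linftyOpSeminormedAddCommGroup

theorem Matrix.norm_apply_le_linfty_opNorm {m n α : Type*} [Fintype m] [Fintype n]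
    [SeminormedAddCommGroup α] (A : Matrix m n α) (i : m) (j : n) : ‖A i j‖ ≤ ‖A‖ := by
  rw [Matrix.linfty_opNorm_def]
  calc ‖A i j‖ ≤ ∑ j', ‖A i j'‖ := single_le_sum (fun _ _ => norm_nonneg _) (mem_univ j)
    _ = ((∑ j', ‖A i j'‖₊ : NNReal) : ℝ) := by push_cast; rfl
    _ ≤ _ := NNReal.coe_le_coe.2 (le_sup (f := fun i => ∑ j, ‖A i j‖₊) (mem_univ i))

end LinftyOp

namespace HCIZ

open Equiv Equiv.Perm

section RightRegular

variable (G R : Type*) [Group G] [Fintype G] [DecidableEq G] [Semiring R]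

def rightRegular : G →* Matrix G G R where
  toFun g := Matrix.of fun a b => if a * g = b then 1 else 0
  map_one' := by ext a b; simp [Matrix.one_apply]
  map_mul' g h := by
    ext a b
    simp only [Matrix.of_apply, Matrix.mul_apply, ite_mul, one_mul, zero_mul, sum_ite_eq, mem_univ,
      if_true, mul_assoc]

variable {G R}

theorem rightRegular_apply (g a b : G) :
    rightRegular G R g a b = if a * g = b then 1 else 0 := rfl

end RightRegular

variable {d : ℕ}

def permsBelow (k : ℕ) : Finset (Perm (Fin d)) := {π | ∀ x : Fin d, k ≤ x → π x = x}

theorem mem_permsBelow {k : ℕ} {π : Perm (Fin d)} :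
    π ∈ permsBelow k ↔ ∀ x : Fin d, k ≤ x → π x = x := by
  simp [permsBelow]

theorem permsBelow_zero : permsBelow (d := d) 0 = {1} := by
  ext π
  simp [mem_permsBelow, Equiv.ext_iff]

theorem permsBelow_of_le {k : ℕ} (hk : d ≤ k) : permsBelow (d := d) k = univ := by
  ext π
  simp only [mem_permsBelow, mem_univ, iff_true]
  intro x hx
  omega

theorem filter_apply_eq_permsBelow_succ (t : Fin d) :
    {σ ∈ permsBelow (t + 1 : ℕ) | σ t = t} = permsBelow t := by
  ext σ
  simp only [mem_filter, mem_permsBelow]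
  refine ⟨fun ⟨h, ht⟩ x hx => (eq_or_lt_of_le hx).elim (fun h' => Fin.ext h' ▸ ht)
    fun h' => h x h', fun h => ⟨fun x hx => h x (by omega), h t le_rfl⟩⟩

theorem sum_permsBelow_succ {M : Type*} [AddCommMonoid M] (t : Fin d) (f : Perm (Fin d) → M) :
    ∑ σ ∈ permsBelow (t + 1 : ℕ), f σ =
      ∑ π ∈ permsBelow t, (f π + ∑ s ∈ Iio t, f (swap s t * π)) := by
  rw [sum_add_distrib, ← sum_filter_add_sum_filter_not _ (fun σ => σ t = t),
    filter_apply_eq_permsBelow_succ, ← sum_product']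
  congr 1
  refine sum_nbij' (fun σ => (swap (σ t) t * σ, σ t)) (fun p => swap p.2 t * p.1)
    ?_ ?_ ?_ ?_ fun σ _ => by simp [← mul_assoc]
  · intro σ hσ
    simp only [mem_filter, mem_permsBelow] at hσ
    obtain ⟨hσ, hσt⟩ := hσ
    have hlt : σ t < t :=
      lt_of_le_of_ne (not_lt.1 fun h => hσt (σ.injective (hσ _ (Fin.lt_def.1 h)))) hσt
    simp only [mem_product, mem_Iio, hlt, and_true, mem_permsBelow, Perm.mul_apply]
    intro x hx
    rcases eq_or_lt_of_le hx with h | h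
    · rw [← Fin.ext h, swap_apply_left]
    · rw [hσ x h, swap_apply_of_ne_of_ne (by omega) (by omega)]
  · rintro ⟨π, s⟩ hp
    simp only [mem_product, mem_Iio, mem_permsBelow] at hp
    obtain ⟨hπ, hs⟩ := hp
    simp only [mem_filter, mem_permsBelow, Perm.mul_apply, hπ t le_rfl, swap_apply_right]
    refine ⟨fun x hx => ?_, hs.ne⟩
    rw [hπ x (by omega), swap_apply_of_ne_of_ne (by omega) (by omega)]
  · intro σ _
    simp [← mul_assoc]
  · rintro ⟨π, s⟩ hp
    simp [← mul_assoc, (mem_permsBelow.1 (mem_product.1 hp).1) t le_rfl]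

variable (R : Type*) [CommSemiring R]

def jucysMurphy (t : Fin d) : Matrix (Perm (Fin d)) (Perm (Fin d)) R :=
  ∑ s ∈ Iio t, rightRegular _ R (swap s t)

-- Since `cycleCount` also counts the fixed points `≥ k`, this is `x ^ (d - k)` times the
-- product `(x + J_{k-1}) ⋯ (x + J_0)`.
def classSum (x : R) (k : ℕ) : Matrix (Perm (Fin d)) (Perm (Fin d)) R :=
  ∑ π ∈ permsBelow k, x ^ cycleCount π • rightRegular _ R π

theorem classSum_zero (x : R) : classSum (d := d) R x 0 = x ^ d • 1 := by
  simp [classSum, permsBelow_zero, cycleCount, card_parts_partition]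

theorem add_jucysMurphy_mul_classSum (x : R) (t : Fin d) :
    (x • 1 + jucysMurphy R t) * classSum R x t = x • classSum R x (t + 1 : ℕ) := by
  rw [classSum, classSum, smul_sum, sum_permsBelow_succ, mul_sum]
  refine sum_congr rfl fun π hπ => ?_
  rw [add_mul, smul_mul_assoc, one_mul, jucysMurphy, sum_mul]
  congr 1
  refine sum_congr rfl fun s hs => ?_
  rw [mul_smul_comm, ← map_mul, smul_smul, ← pow_succ', cycleCount, cycleCount,
    card_parts_partition_swap_mul (mem_Iio.1 hs).ne (mem_permsBelow.1 hπ t le_rfl)]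

theorem classSum_succ {K : Type*} [Field K] {x : K} (hx : x ≠ 0) (t : Fin d) :
    classSum K x (t + 1 : ℕ) = (1 - -x⁻¹ • jucysMurphy K t) * classSum K x t := by
  have hfactor : 1 - -x⁻¹ • jucysMurphy K t = x⁻¹ • (x • 1 + jucysMurphy K t) := by
    rw [smul_add, smul_smul, inv_mul_cancel₀ hx, one_smul, neg_smul, sub_neg_eq_add]
  rw [hfactor, smul_mul_assoc, add_jucysMurphy_mul_classSum, smul_smul, inv_mul_cancel₀ hx,
    one_smul]

theorem classSum_eq_gramMatrix (N : ℕ) : classSum ℂ (N : ℂ) d = gramMatrix d N := by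
  ext ρ σ
  rw [classSum, permsBelow_of_le le_rfl, Matrix.sum_apply, sum_eq_single (ρ⁻¹ * σ)]
  · simp only [Matrix.smul_apply, rightRegular_apply, mul_inv_cancel_left, if_true, smul_eq_mul,
      mul_one, gramMatrix, Matrix.of_apply]
  · intro π _ hπ
    rw [Matrix.smul_apply, rightRegular_apply,
      if_neg fun h => hπ (by rw [← h, inv_mul_cancel_left]), smul_zero]
  · simp

theorem mem_permsBelow_iff_forall_mem_support {k : ℕ} {π : Perm (Fin d)} :
    π ∈ permsBelow k ↔ ∀ x ∈ π.support, (x : ℕ) < k := by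
  simp only [mem_permsBelow, Perm.mem_support]
  exact forall_congr' fun x => not_imp_not.symm.trans (by rw [not_le])

theorem mem_permsBelow_succ_iff {t : Fin d} {π : Perm (Fin d)} :
    π ∈ permsBelow (t + 1 : ℕ) ↔ π.support.max ≤ t := by
  simp only [mem_permsBelow_iff_forall_mem_support, Nat.lt_succ_iff, Finset.max_le_iff,
    WithBot.coe_le_coe, Fin.le_def]

theorem mem_permsBelow_iff_max_lt {t : Fin d} {π : Perm (Fin d)} :
    π ∈ permsBelow t ↔ π.support.max < t := by
  rw [mem_permsBelow_iff_forall_mem_support, Finset.max, Finset.sup_lt_iff (WithBot.bot_lt_coe t)]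
  simp only [WithBot.coe_lt_coe, Fin.lt_def]

open Classical in
noncomputable def monotoneTuplesBelow (k r : ℕ) : Finset (Fin r → Perm (Fin d)) :=
  {τ | IsMonotoneTuple τ ∧ ∀ i, τ i ∈ permsBelow k}

theorem mem_monotoneTuplesBelow {k r : ℕ} {τ : Fin r → Perm (Fin d)} :
    τ ∈ monotoneTuplesBelow k r ↔ IsMonotoneTuple τ ∧ ∀ i, τ i ∈ permsBelow k := by
  simp only [monotoneTuplesBelow, mem_filter, mem_univ, true_and]

theorem monotoneTuplesBelow_subset_succ (k r : ℕ) :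
    monotoneTuplesBelow (d := d) k r ⊆ monotoneTuplesBelow (k + 1) r := by
  intro τ
  simp only [mem_monotoneTuplesBelow, mem_permsBelow]
  exact fun ⟨h, hb⟩ => ⟨h, fun i x hx => hb i x (by omega)⟩

theorem snoc_mem_monotoneTuplesBelow {k n : ℕ} {τ : Fin n → Perm (Fin d)} {g : Perm (Fin d)} :
    (Fin.snoc τ g : Fin (n + 1) → Perm (Fin d)) ∈ monotoneTuplesBelow k (n + 1) ↔
      τ ∈ monotoneTuplesBelow k n ∧ g.IsSwap ∧ g ∈ permsBelow k ∧
        ∀ i, (τ i).support.max ≤ g.support.max := by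
  have hmax : (fun i => ((Fin.snoc τ g : Fin (n + 1) → Perm (Fin d)) i).support.max) =
      Fin.snoc (fun i => (τ i).support.max) g.support.max :=
    Fin.comp_snoc (fun g : Perm (Fin d) => g.support.max) τ g
  simp only [mem_monotoneTuplesBelow, IsMonotoneTuple, hmax, Fin.monotone_snoc_iff,
    Fin.forall_fin_succ', Fin.snoc_castSucc, Fin.snoc_last]
  tauto

theorem last_eq_swap_of_mem_of_notMem {t : Fin d} {n : ℕ} {τ : Fin (n + 1) → Perm (Fin d)}
    (hτ : τ ∈ monotoneTuplesBelow (t + 1 : ℕ) (n + 1)) (hτ' : τ ∉ monotoneTuplesBelow t (n + 1)) :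
    τ (Fin.last n) t < t ∧ τ (Fin.last n) = swap (τ (Fin.last n) t) t := by
  rw [mem_monotoneTuplesBelow] at hτ hτ'
  obtain ⟨⟨hswap, hmono⟩, hbelow⟩ := hτ
  obtain ⟨s, u, hsu, hlast⟩ := (hswap (Fin.last n)).exists_lt
  have hmax : (τ (Fin.last n)).support.max = u := by rw [hlast, max_support_swap hsu]
  have hut : u ≤ t := by
    have := mem_permsBelow_succ_iff.1 (hbelow (Fin.last n))
    rwa [hmax, WithBot.coe_le_coe] at this
  have htu : t ≤ u := by
    obtain ⟨i, hi⟩ : ∃ i, τ i ∉ permsBelow t := by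
      simpa using fun h => hτ' ⟨⟨hswap, hmono⟩, h⟩
    rw [mem_permsBelow_iff_max_lt, not_lt] at hi
    exact WithBot.coe_le_coe.1 (hmax ▸ hi.trans (hmono (Fin.le_last i)))
  obtain rfl := le_antisymm hut htu
  rw [hlast, swap_apply_right]
  exact ⟨hsu, rfl⟩

theorem snoc_swap_mem_monotoneTuplesBelow {t : Fin d} {n : ℕ} {τ : Fin n → Perm (Fin d)}
    (hτ : τ ∈ monotoneTuplesBelow (t + 1 : ℕ) n) {s : Fin d} (hst : s < t) :
    Fin.snoc τ (swap s t) ∈ monotoneTuplesBelow (t + 1 : ℕ) (n + 1) ∧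
      Fin.snoc τ (swap s t) ∉ monotoneTuplesBelow t (n + 1) := by
  rw [snoc_mem_monotoneTuplesBelow, snoc_mem_monotoneTuplesBelow, mem_permsBelow_succ_iff,
    mem_permsBelow_iff_max_lt, max_support_swap hst]
  refine ⟨⟨hτ, ⟨s, t, hst.ne, rfl⟩, le_rfl, fun i => ?_⟩, fun h => lt_irrefl _ h.2.2.1⟩
  exact mem_permsBelow_succ_iff.1 ((mem_monotoneTuplesBelow.1 hτ).2 i)

theorem sum_monotoneTuplesBelow_succ {M : Type*} [AddCommMonoid M] (t : Fin d) (n : ℕ)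
    (f : (Fin (n + 1) → Perm (Fin d)) → M) :
    ∑ τ ∈ monotoneTuplesBelow (t + 1 : ℕ) (n + 1), f τ =
      ∑ τ ∈ monotoneTuplesBelow t (n + 1), f τ +
        ∑ τ ∈ monotoneTuplesBelow (t + 1 : ℕ) n, ∑ s ∈ Iio t, f (Fin.snoc τ (swap s t)) := by
  rw [← sum_filter_add_sum_filter_not _ (· ∈ monotoneTuplesBelow t (n + 1)), filter_mem_eq_inter,
    inter_eq_right.2 (monotoneTuplesBelow_subset_succ _ _), ← sum_product']
  congr 1
  have hsnoc : ∀ τ ∈ {τ ∈ monotoneTuplesBelow (t + 1 : ℕ) (n + 1) |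
      τ ∉ monotoneTuplesBelow t (n + 1)}, Fin.snoc (Fin.init τ) (swap (τ (Fin.last n) t) t) = τ :=
    fun τ hτ => by
      rw [mem_filter] at hτ
      rw [← (last_eq_swap_of_mem_of_notMem hτ.1 hτ.2).2, Fin.snoc_init_self]
  refine sum_nbij' (fun τ => (Fin.init τ, τ (Fin.last n) t))
    (fun p => Fin.snoc p.1 (swap p.2 t)) (fun τ hτ => ?_) (fun p hp => ?_) hsnoc
    (fun p _ => by simp) fun τ hτ => congrArg f (hsnoc τ hτ).symm
  · have hinit := (mem_filter.1 hτ).1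
    rw [← Fin.snoc_init_self τ, snoc_mem_monotoneTuplesBelow] at hinit
    exact mem_product.2
      ⟨hinit.1, mem_Iio.2 (last_eq_swap_of_mem_of_notMem (mem_filter.1 hτ).1 (mem_filter.1 hτ).2).1⟩
  · obtain ⟨hτ, hs⟩ := mem_product.1 hp
    exact mem_filter.2 (snoc_swap_mem_monotoneTuplesBelow hτ (mem_Iio.1 hs))

noncomputable def monotoneProductSum (k r : ℕ) : Matrix (Perm (Fin d)) (Perm (Fin d)) R :=
  ∑ τ ∈ monotoneTuplesBelow k r, rightRegular _ R (List.ofFn τ).prod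

theorem monotoneProductSum_zero_right (k : ℕ) : monotoneProductSum (d := d) R k 0 = 1 := by
  have hempty : monotoneTuplesBelow (d := d) k 0 = {Fin.elim0} := by
    ext τ
    simp only [mem_singleton, mem_monotoneTuplesBelow, IsMonotoneTuple, IsEmpty.forall_iff,
      true_and, and_true, Subsingleton.elim τ Fin.elim0, iff_true]
    exact fun i => i.elim0
  simp [monotoneProductSum, hempty]

theorem monotoneProductSum_zero_succ (r : ℕ) : monotoneProductSum (d := d) R 0 (r + 1) = 0 := by
  refine sum_eq_zero fun τ hτ => absurd ?_ ((mem_monotoneTuplesBelow.1 hτ).1.1 0).isCycle.ne_one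
  simpa [permsBelow_zero] using (mem_monotoneTuplesBelow.1 hτ).2 0

theorem monotoneProductSum_succ (t : Fin d) (n : ℕ) :
    monotoneProductSum R (t + 1 : ℕ) (n + 1) =
      monotoneProductSum R t (n + 1) + monotoneProductSum R (t + 1 : ℕ) n * jucysMurphy R t := by
  rw [monotoneProductSum, sum_monotoneTuplesBelow_succ, monotoneProductSum, monotoneProductSum,
    jucysMurphy, sum_mul_sum]
  congr 1
  refine sum_congr rfl fun τ _ => sum_congr rfl fun s _ => ?_
  rw [List.ofFn_succ', List.prod_concat, map_mul]
  simp

theorem monotoneProductSum_succ_eq_sum_antidiagonal (t : Fin d) (n : ℕ) :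
    monotoneProductSum R (t + 1 : ℕ) n =
      ∑ p ∈ antidiagonal n, monotoneProductSum R t p.1 * jucysMurphy R t ^ p.2 := by
  induction n with
  | zero => simp [monotoneProductSum_zero_right]
  | succ n ih =>
    rw [Nat.sum_antidiagonal_succ', monotoneProductSum_succ, ih, sum_mul]
    simp [pow_succ, mul_assoc]

theorem smul_monotoneProductSum_succ (z : R) (t : Fin d) (n : ℕ) :
    z ^ n • monotoneProductSum R (t + 1 : ℕ) n =
      ∑ p ∈ antidiagonal n,
        (z ^ p.1 • monotoneProductSum R t p.1) * (z • jucysMurphy R t) ^ p.2 := by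
  rw [monotoneProductSum_succ_eq_sum_antidiagonal, smul_sum]
  refine sum_congr rfl fun p hp => ?_
  rw [smul_pow, smul_mul_smul_comm, ← pow_add, mem_antidiagonal.1 hp]

theorem monotoneProductSum_apply (r : ℕ) (ρ σ : Perm (Fin d)) :
    monotoneProductSum ℂ d r ρ σ = mcount d r (ρ⁻¹ * σ) := by
  classical
  simp only [monotoneProductSum, Matrix.sum_apply, rightRegular_apply, sum_boole, mcount,
    Nat.card_eq_fintype_card, Fintype.card_subtype]
  congr 2
  ext τ
  simp [mem_monotoneTuplesBelow, permsBelow_of_le le_rfl, eq_inv_mul_iff_mul_eq]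

section LinftyOp

attribute [local instance] Matrix.linftyOpNormedRing Matrix.linftyOpNormedAlgebra

theorem norm_rightRegular_le {G 𝕜 : Type*} [Group G] [Fintype G] [DecidableEq G] [NormedRing 𝕜]
    [NormOneClass 𝕜] (g : G) : ‖rightRegular G 𝕜 g‖ ≤ 1 := by
  have hrow : ∀ a, ∑ b, ‖rightRegular G 𝕜 g a b‖₊ = 1 := fun a => by
    simp [rightRegular_apply, apply_ite]
  rw [Matrix.linfty_opNorm_def]
  exact_mod_cast Finset.sup_le fun a _ => (hrow a).le

theorem norm_jucysMurphy_le {𝕜 : Type*} [NormedCommRing 𝕜] [NormOneClass 𝕜] (t : Fin d) :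
    ‖jucysMurphy 𝕜 t‖ ≤ t :=
  (norm_sum_le _ _).trans <| by
    simpa using sum_le_card_nsmul (Iio t) _ 1 fun s _ => norm_rightRegular_le (swap s t)

theorem norm_neg_inv_smul_jucysMurphy_lt_one {N : ℕ} {t : Fin d} (htN : (t : ℕ) < N) :
    ‖-(N : ℂ)⁻¹ • jucysMurphy ℂ t‖ < 1 := by
  rw [norm_smul, norm_neg, norm_inv, Complex.norm_natCast]
  calc (N : ℝ)⁻¹ * ‖jucysMurphy ℂ t‖ ≤ (N : ℝ)⁻¹ * t :=
        mul_le_mul_of_nonneg_left (norm_jucysMurphy_le t) (by positivity)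
    _ < 1 := by
      rw [inv_mul_lt_iff₀ (Nat.cast_pos.2 (by omega)), mul_one]
      exact_mod_cast htN

theorem summable_norm_and_tsum_mul_classSum {N k : ℕ} (hkd : k ≤ d) (hkN : k ≤ N) :
    Summable (fun r => ‖(-(N : ℂ)⁻¹) ^ r • monotoneProductSum (d := d) ℂ k r‖) ∧
      (∑' r, (-(N : ℂ)⁻¹) ^ r • monotoneProductSum ℂ k r) * classSum (d := d) ℂ (N : ℂ) k =
        (N : ℂ) ^ d • 1 := by
  induction k with
  | zero =>
    have hzero : ∀ r ≠ 0, (-(N : ℂ)⁻¹) ^ r • monotoneProductSum ℂ (d := d) 0 r = 0 := by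
      rintro (_ | r) hr
      · exact absurd rfl hr
      · rw [monotoneProductSum_zero_succ, smul_zero]
    refine ⟨summable_of_ne_finset_zero (s := {0}) fun r hr => ?_, ?_⟩
    · rw [hzero r (by simpa using hr), norm_zero]
    · rw [tsum_eq_single 0 hzero, classSum_zero]
      simp [monotoneProductSum_zero_right]
  | succ k ih =>
    obtain ⟨hsum, hmul⟩ := ih (by omega) (by omega)
    set t : Fin d := ⟨k, by omega⟩
    have hx : ‖-(N : ℂ)⁻¹ • jucysMurphy ℂ t‖ < 1 := norm_neg_inv_smul_jucysMurphy_lt_one hkN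
    have hterms : ∀ n, (-(N : ℂ)⁻¹) ^ n • monotoneProductSum ℂ (k + 1) n =
        ∑ p ∈ antidiagonal n, ((-(N : ℂ)⁻¹) ^ p.1 • monotoneProductSum ℂ k p.1) *
          (-(N : ℂ)⁻¹ • jucysMurphy ℂ t) ^ p.2 :=
      smul_monotoneProductSum_succ ℂ _ t
    have hclass : classSum ℂ (N : ℂ) (k + 1) =
        (1 - -(N : ℂ)⁻¹ • jucysMurphy ℂ t) * classSum ℂ (N : ℂ) k :=
      classSum_succ (Nat.cast_ne_zero.2 (by omega)) t
    refine ⟨(summable_norm_sum_antidiagonal_mul_pow hsum hx).congr fun n =>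
      congrArg norm (hterms n).symm, ?_⟩
    rw [tsum_congr hterms, hclass, ← mul_assoc]
    exact (congrArg (· * classSum ℂ (N : ℂ) k)
      (tsum_sum_antidiagonal_mul_pow_mul_one_sub hsum hx)).trans hmul

theorem exists_hasSum_mcount_mul_gramMatrix {N : ℕ} (hdN : d ≤ N) :
    ∃ Φ : Matrix (Perm (Fin d)) (Perm (Fin d)) ℂ, Φ * gramMatrix d N = (N : ℂ) ^ d • 1 ∧
      ∀ ρ σ : Perm (Fin d),
        (Summable fun r => ‖(-(N : ℂ)⁻¹) ^ r * mcount d r (ρ⁻¹ * σ)‖) ∧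
          HasSum (fun r => (-(N : ℂ)⁻¹) ^ r * mcount d r (ρ⁻¹ * σ)) (Φ ρ σ) := by
  obtain ⟨hsum, hmul⟩ := summable_norm_and_tsum_mul_classSum le_rfl hdN
  have hentry : ∀ r ρ σ, ((-(N : ℂ)⁻¹) ^ r • monotoneProductSum ℂ d r) ρ σ =
      (-(N : ℂ)⁻¹) ^ r * mcount d r (ρ⁻¹ * σ) := fun r ρ σ => by
    rw [Matrix.smul_apply, monotoneProductSum_apply, smul_eq_mul]
  refine ⟨_, classSum_eq_gramMatrix N ▸ hmul, fun ρ σ => ⟨?_, ?_⟩⟩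
  · exact hsum.of_nonneg_of_le (fun _ => norm_nonneg _) fun r =>
      hentry r ρ σ ▸ Matrix.norm_apply_le_linfty_opNorm _ ρ σ
  · have h := Pi.hasSum.1 (Pi.hasSum.1 hsum.of_norm.hasSum ρ) σ
    simp only [hentry] at h
    exact h

end LinftyOp

/-- For `1 ≤ d ≤ N` the Gram matrix `[N^{c(ρ⁻¹σ)}]` is invertible and the entries
of its inverse are the absolutely convergent series
`∑_r (-1)^r N^{-d-r} m_r(ρ⁻¹σ)`. -/
theorem weingarten_inverse (d N : ℕ) (hd : 1 ≤ d) (hdN : d ≤ N) :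
    IsUnit (gramMatrix d N) ∧
    ∀ ρ σ : Equiv.Perm (Fin d),
      (Summable fun r : ℕ =>
        ‖(-1 : ℂ) ^ r * ((N : ℂ) ^ (d + r))⁻¹ * (mcount d r (ρ⁻¹ * σ) : ℂ)‖) ∧
      HasSum (fun r : ℕ =>
          (-1 : ℂ) ^ r * ((N : ℂ) ^ (d + r))⁻¹ * (mcount d r (ρ⁻¹ * σ) : ℂ))
        ((gramMatrix d N)⁻¹ ρ σ) := by
  obtain ⟨Φ, hΦ, hseries⟩ := exists_hasSum_mcount_mul_gramMatrix hdN
  have hNd : (N : ℂ) ^ d ≠ 0 := pow_ne_zero _ (Nat.cast_ne_zero.2 (by omega))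
  have hleft : ((N : ℂ) ^ d)⁻¹ • Φ * gramMatrix d N = 1 := by
    rw [smul_mul_assoc, hΦ, smul_smul, inv_mul_cancel₀ hNd, one_smul]
  have hcoeff : ∀ r, (-1 : ℂ) ^ r * ((N : ℂ) ^ (d + r))⁻¹ =
      ((N : ℂ) ^ d)⁻¹ * (-(N : ℂ)⁻¹) ^ r := fun r => by
    rw [pow_add, mul_inv, neg_pow ((N : ℂ)⁻¹), inv_pow]
    ring
  refine ⟨(Matrix.isUnit_iff_isUnit_det _).2 (Matrix.isUnit_det_of_left_inverse hleft),
    fun ρ σ => ?_⟩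
  obtain ⟨hsum, hhas⟩ := hseries ρ σ
  simp only [hcoeff, mul_assoc, Matrix.inv_eq_left_inv hleft, Matrix.smul_apply, smul_eq_mul]
  exact ⟨by simpa [norm_mul] using hsum.mul_left ‖((N : ℂ) ^ d)⁻¹‖, hhas.mul_left _⟩

end HCIZ
end

section
/- Let s(X) be the formal power series Σ_{n=1}^∞ (2^{n−1}/n)·C(3n−2, n−1)·X^n with rational coefficients, where C(·,·) denotes the binomial coefficient. Then s(X)·(1 − 2·s(X))² = X as formal power series; that is, s is the unique formal power series solution of the functional equation s = X·(1−2s)^{−2}. -/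
open MeasureTheory Matrix

namespace HCIZ

/-- The series `s(X) = ∑_{n≥1} (2^{n-1}/n) C(3n-2, n-1) X^n`. -/
noncomputable def sSeries : PowerSeries ℚ :=
  PowerSeries.mk fun n =>
    if n = 0 then 0 else (2 : ℚ) ^ (n - 1) / n * ((3 * n - 2).choose (n - 1))

/-! Differentiating `t (1 - 2t)² = X` twice and eliminating gives the linear ODE
`(2X - 27X²) t'' + (1 - 27X) t' + 3t = 1`, whose coefficient recurrence `(m + 1)(2m + 1) aₘ₊₁ = (27m² - 3) aₘ + [m = 0]` determines a solution
from `a₀`; the equation forces `a₀ = 0`, and the coefficients of `s` satisfy the same recurrence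
because of the ratio of consecutive binomial coefficients. A solution exists by Hensel's lemma in
the `X`-adically complete ring `ℚ⟦X⟧`. -/

theorem _root_.Nat.add_add_three_choose_succ_mul (k m : ℕ) :
    (k + m + 3).choose (k + 1) * ((k + 1) * (m + 1) * (m + 2))
      = (k + m + 1) * (k + m + 2) * (k + m + 3) * (k + m).choose k := by
  have h1 := Nat.add_one_mul_choose_eq (k + m) k
  have h2 := Nat.choose_mul_succ_eq (k + m + 1) (k + 1)
  have h3 := Nat.choose_mul_succ_eq (k + m + 2) (k + 1)
  rw [show k + m + 1 + 1 - (k + 1) = m + 1 by omega] at h2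
  rw [show k + m + 2 + 1 - (k + 1) = m + 2 by omega] at h3
  calc (k + m + 3).choose (k + 1) * ((k + 1) * (m + 1) * (m + 2))
      = (k + m + 2 + 1).choose (k + 1) * (m + 2) * (m + 1) * (k + 1) := by ring
    _ = (k + m + 1 + 1).choose (k + 1) * (m + 1) * (k + 1) * (k + m + 3) := by rw [← h3]; ring
    _ = (k + m + 1) * (k + m).choose k * (k + m + 2) * (k + m + 3) := by rw [← h2, h1]; ring
    _ = _ := by ring

section FunctionalEquation

open PowerSeries

variable {R : Type*} [CommRing R]

def SolvesFunctionalEquation (t : R⟦X⟧) : Prop := t * (1 - 2 * t) ^ 2 = X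

theorem derivative_ofNat (n : ℕ) [n.AtLeastTwo] : d⁄dX R (no_index (OfNat.ofNat n : R⟦X⟧)) = 0 :=
  (d⁄dX R).map_natCast n

theorem coeff_ofNat_mul (a : ℕ) [a.AtLeastTwo] (f : R⟦X⟧) (n : ℕ) :
    coeff n ((no_index (OfNat.ofNat a) : R⟦X⟧) * f) = OfNat.ofNat a * coeff n f := by
  rw [← map_ofNat C a, coeff_C_mul]

theorem coeff_X_mul_derivative (f : R⟦X⟧) (n : ℕ) : coeff n (X * d⁄dX R f) = n * coeff n f := by
  cases n with
  | zero => simp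
  | succ n => rw [coeff_succ_X_mul, coeff_derivative, mul_comm]; push_cast; ring

theorem coeff_succ_of_ode {f : R⟦X⟧}
    (hf : 2 * X * d⁄dX R (d⁄dX R f) + d⁄dX R f - 27 * X * d⁄dX R (X * d⁄dX R f) + 3 * f = 1)
    (m : ℕ) :
    ((m + 1) * (2 * m + 1) : R) * coeff (m + 1) f
      = (27 * m ^ 2 - 3) * coeff m f + if m = 0 then 1 else 0 := by
  have hm := congrArg (coeff m) hf
  simp only [mul_assoc, map_add, map_sub, coeff_ofNat_mul, coeff_X_mul_derivative,
    coeff_derivative, coeff_one] at hm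
  linear_combination hm

namespace SolvesFunctionalEquation

variable {t : R⟦X⟧}

theorem derivative_mul_eq_one (h : SolvesFunctionalEquation t) :
    d⁄dX R t * (1 - 8 * t + 12 * t ^ 2) = 1 := by
  have hD := congrArg (d⁄dX R) h
  simp only [Derivation.leibniz, Derivation.leibniz_pow, map_sub, Derivation.map_one_eq_zero,
    derivative_ofNat, derivative_X, smul_eq_mul] at hD
  linear_combination hD

theorem derivative_derivative_mul_eq (h : SolvesFunctionalEquation t) :
    d⁄dX R (d⁄dX R t) * (1 - 8 * t + 12 * t ^ 2) = (8 - 24 * t) * d⁄dX R t ^ 2 := by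
  have hD := congrArg (d⁄dX R) h.derivative_mul_eq_one
  simp only [Derivation.leibniz, Derivation.leibniz_pow, map_sub, map_add,
    Derivation.map_one_eq_zero, derivative_ofNat, smul_eq_mul] at hD
  linear_combination hD

theorem constantCoeff_eq_zero (h : SolvesFunctionalEquation t) : constantCoeff t = 0 := by
  set c := constantCoeff t
  have hc := congrArg constantCoeff h
  have hu := congrArg constantCoeff h.derivative_mul_eq_one
  simp only [← map_ofNat C, map_mul, map_add, map_sub, map_one, map_pow, constantCoeff_C,
    constantCoeff_X] at hc hu
  have hunit : IsUnit (1 - 2 * c) :=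
    .of_mul_eq_one (constantCoeff (d⁄dX R t) * (1 - 6 * c)) (by linear_combination hu)
  exact (hunit.pow 2).mul_left_eq_zero.mp hc

theorem ode (h : SolvesFunctionalEquation t) :
    2 * X * d⁄dX R (d⁄dX R t) + d⁄dX R t - 27 * X * d⁄dX R (X * d⁄dX R t) + 3 * t = 1 := by
  set u := d⁄dX R t
  set v := d⁄dX R u
  set w : R⟦X⟧ := 1 - 8 * t + 12 * t ^ 2
  have h1 : u * w = 1 := h.derivative_mul_eq_one
  have h2 : v * w = (8 - 24 * t) * u ^ 2 := h.derivative_derivative_mul_eq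
  have hX : t * (1 - 2 * t) ^ 2 = X := h
  rw [Derivation.leibniz, derivative_X, smul_eq_mul, smul_eq_mul, mul_one]
  set E := 2 * X * v + u - 27 * X * (X * v + u) + 3 * t - 1
  -- `w` is a unit with inverse `u`, so it suffices that `E * w ^ 3 = 0`.
  have hE : E * w ^ 3 = 0 := by
    linear_combination (2 * X - 27 * X ^ 2) * w ^ 2 * h2
      + ((2 * X - 27 * X ^ 2) * (8 - 24 * t) * (u * w + 1) + (1 - 27 * X) * w ^ 2) * h1
      - ((2 - 27 * (X + t * (1 - 2 * t) ^ 2)) * (8 - 24 * t) - 27 * w ^ 2) * hX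
  linear_combination u ^ 3 * hE - E * ((u * w) ^ 2 + u * w + 1) * h1

end SolvesFunctionalEquation

theorem exists_solvesFunctionalEquation [Invertible (2 : R)] :
    ∃ t : R⟦X⟧, SolvesFunctionalEquation t := by
  -- `y = 2t` is a root of a monic cubic with the simple root `0` modulo `X`.
  let f : Polynomial R⟦X⟧ := .X ^ 3 - 2 * .X ^ 2 + .X - .C (2 * X)
  have hf : f.Monic := by unfold f; monicity!
  obtain ⟨y, hy, -⟩ := HenselianRing.is_henselian (I := Ideal.span {X}) f hf 0
    (by simp [f, Ideal.mem_span_singleton]) (by simp [f])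
  have hy : y * (1 - y) ^ 2 = 2 * X := by
    simp only [f, Polynomial.IsRoot.def, Polynomial.eval_sub, Polynomial.eval_add,
      Polynomial.eval_pow, Polynomial.eval_mul, Polynomial.eval_X, Polynomial.eval_ofNat,
      Polynomial.eval_C] at hy
    linear_combination hy
  set c : R⟦X⟧ := C ⅟2
  have hc : 2 * c = 1 := by rw [← map_ofNat C 2, ← map_mul, mul_invOf_self, map_one]
  refine ⟨c * y, ?_⟩
  unfold SolvesFunctionalEquation
  linear_combination c * hy + (X - c * y ^ 2 * (2 - y - 2 * c * y)) * hc

end FunctionalEquation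

open PowerSeries in
theorem coeff_succ_sSeries (m : ℕ) :
    ((m + 1) * (2 * m + 1) : ℚ) * coeff (m + 1) sSeries
      = (27 * m ^ 2 - 3) * coeff m sSeries + if m = 0 then 1 else 0 := by
  rcases m with _ | k
  · simp [sSeries]
  have hchoose := Nat.add_add_three_choose_succ_mul k (2 * k + 1)
  rw [show k + (2 * k + 1) + 3 = 3 * (k + 1 + 1) - 2 by omega,
    show k + (2 * k + 1) = 3 * (k + 1) - 2 by omega] at hchoose
  have hq : ((3 * (k + 1 + 1) - 2).choose (k + 1) : ℚ) * ((k + 1) * (2 * k + 2) * (2 * k + 3))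
      = (3 * k + 2) * (3 * k + 3) * (3 * k + 4) * (3 * (k + 1) - 2).choose k := by
    exact_mod_cast hchoose
  simp only [sSeries, coeff_mk, if_neg (Nat.succ_ne_zero _), Nat.add_sub_cancel]
  push_cast
  field_simp
  refine mul_left_cancel₀ (show (k + 1 : ℚ) ≠ 0 by positivity) ?_
  linear_combination 2 ^ k * hq

open PowerSeries in
theorem SolvesFunctionalEquation.eq_sSeries {t : ℚ⟦X⟧} (h : SolvesFunctionalEquation t) :
    t = sSeries := by
  ext n
  induction n with
  | zero => simp [h.constantCoeff_eq_zero, sSeries]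
  | succ m ih =>
    refine mul_left_cancel₀ (show ((m + 1) * (2 * m + 1) : ℚ) ≠ 0 by positivity) ?_
    rw [coeff_succ_of_ode h.ode m, coeff_succ_sSeries m, ih]

/-- `s(X)(1 - 2 s(X))² = X`; moreover `s` is the unique formal power series
solution of this functional equation. -/
theorem sSeries_functional_equation :
    sSeries * (1 - 2 * sSeries) ^ 2 = PowerSeries.X ∧
    ∀ t : PowerSeries ℚ, t * (1 - 2 * t) ^ 2 = PowerSeries.X → t = sSeries := by
  obtain ⟨t, ht⟩ := exists_solvesFunctionalEquation (R := ℚ)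
  exact ⟨ht.eq_sSeries ▸ ht, fun _ ht' => SolvesFunctionalEquation.eq_sSeries ht'⟩

end HCIZ
end
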